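/- arXiv:1905.02838 — 4 statements merged into one kernel-verified Lean document; each statement's English description precedes it below -/
import Mathlib

section
/- Let n ≥ 1, let a := BitVec.allOnes n, and let S be a nonempty set of bitvectors of width n. Suppose x ∈ S satisfies: for every k < n, if there exists y ∈ S with y.getMsbD j = x.getMsbD j for all j < k and y.getMsbD k = true, then x.getMsbD k = true. Then x.toNat ≥ y.toNat for every y ∈ S; i.e., x attains the maximum unsigned value over S. -/
/-! Unsigned order on bitvectors is the lexicographic order of their bits read from the most
significant one. At the first bit where some `y ∈ S` differs from `x`, the greedy condition
forbids `y` to have a `1` there, so `x` has the `1`, `y` the `0`, and `y` is smaller. -/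

namespace BitVec

theorem getMsbD_eq_testBit_toNat {n i : ℕ} (x : BitVec n) (hi : i < n) :
    x.getMsbD i = x.toNat.testBit (n - 1 - i) := by
  simp [getMsbD_eq_getLsbD, hi, testBit_toNat]

theorem toNat_lt_toNat_of_getMsbD {n k : ℕ} {a b : BitVec n} (hk : k < n)
    (hprefix : ∀ j < k, a.getMsbD j = b.getMsbD j)
    (ha : a.getMsbD k = false) (hb : b.getMsbD k = true) :
    a.toNat < b.toNat := by
  refine Nat.lt_of_testBit (n - 1 - k) ?_ ?_ fun j hj => ?_
  · rwa [← getMsbD_eq_testBit_toNat a hk]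
  · rwa [← getMsbD_eq_testBit_toNat b hk]
  · by_cases hjn : j < n
    · obtain ⟨i, rfl⟩ : ∃ i, j = n - 1 - i := ⟨n - 1 - j, by omega⟩
      rw [← getMsbD_eq_testBit_toNat a (by omega), ← getMsbD_eq_testBit_toNat b (by omega)]
      exact hprefix i (by omega)
    · simp only [testBit_toNat, getLsbD_of_ge _ _ (Nat.le_of_not_lt hjn)]

theorem exists_first_getMsbD_ne {n : ℕ} {x y : BitVec n} (hxy : x ≠ y) :
    ∃ k < n, (∀ j < k, x.getMsbD j = y.getMsbD j) ∧ x.getMsbD k ≠ y.getMsbD k := by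
  classical
  have hdiff : ∃ k, k < n ∧ x.getMsbD k ≠ y.getMsbD k := by
    by_contra! hall
    exact hxy (eq_of_getMsbD_eq hall)
  obtain ⟨hk, hne⟩ := Nat.find_spec hdiff
  refine ⟨Nat.find hdiff, hk, fun j hj => ?_, hne⟩
  by_contra hne_j
  exact Nat.find_min hdiff hj ⟨hj.trans hk, hne_j⟩

end BitVec

theorem unsigned_max_lex_greedy_general (n : ℕ) (S : Set (BitVec n)) (x : BitVec n)
    (hgreedy : ∀ k < n,
      (∃ y ∈ S, (∀ j < k, y.getMsbD j = x.getMsbD j) ∧ y.getMsbD k = true) →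
      x.getMsbD k = true) :
    ∀ y ∈ S, y.toNat ≤ x.toNat := by
  intro y hy
  rcases eq_or_ne y x with rfl | hyx
  · exact le_rfl
  obtain ⟨k, hk, hprefix, hdiff⟩ := BitVec.exists_first_getMsbD_ne hyx
  have hyk : y.getMsbD k = false :=
    Bool.eq_false_iff.mpr fun hyk => hdiff (hyk.trans (hgreedy k hk ⟨y, hy, hprefix, hyk⟩).symm)
  have hxk : x.getMsbD k = true := by simpa [hyk] using hdiff.symm
  exact (BitVec.toNat_lt_toNat_of_getMsbD hk hprefix hyk hxk).le

theorem unsigned_max_lex_greedy (n : ℕ) (hn : 1 ≤ n) (S : Set (BitVec n))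
    (hS : S.Nonempty) (x : BitVec n) (hx : x ∈ S)
    (hgreedy : ∀ k < n,
      (∃ y ∈ S, (∀ j < k, y.getMsbD j = x.getMsbD j) ∧ y.getMsbD k = true) →
      x.getMsbD k = true) :
    ∀ y ∈ S, y.toNat ≤ x.toNat :=
  unsigned_max_lex_greedy_general n S x hgreedy
end

section
/- Let n ≥ 1, let a be the bitvector of width n with MSB 0 and all other bits 1 (signed value 2^(n-1) - 1), and let S be a nonempty set of bitvectors of width n. Suppose x ∈ S satisfies: for every k < n, if there exists y ∈ S with y.getMsbD j = x.getMsbD j for all j < k and y.getMsbD k = a.getMsbD k, then x.getMsbD k = a.getMsbD k. Then x.toInt ≥ y.toInt for every y ∈ S; i.e., x attains the maximum two's-complement signed value over S. -/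
/-!
Comparing two bitvectors at their first differing most significant bit, the greedy condition
forces `x` to carry the attractor bit there while the competitor `y` does not. Hence `x` is below
every `y ∈ S` in the lexicographic order of disagreement with the attractor, i.e.
`(x ^^^ a).toNat ≤ (y ^^^ a).toNat`. For `a = ~~~intMin n = 01…1` this quantity equals
`2 ^ (n - 1) - 1 - toInt`, so minimizing it maximizes the signed value.
-/

namespace BitVec

variable {w : ℕ}

theorem toNat_lt_toNat_of_getMsbD_s3 {x y : BitVec w} {k : ℕ} (hk : k < w)
    (hprefix : ∀ j < k, x.getMsbD j = y.getMsbD j)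
    (hx : x.getMsbD k = false) (hy : y.getMsbD k = true) : x.toNat < y.toNat := by
  have getMsbD_sub_eq_testBit (z : BitVec w) {i : ℕ} (hi : i < w) :
      z.getMsbD (w - 1 - i) = z.toNat.testBit i := by
    rw [getMsbD_eq_getLsbD, testBit_toNat, Nat.sub_sub_self (by omega)]
    simp only [Bool.and_eq_right_iff_imp, decide_eq_true_eq]
    omega
  refine Nat.lt_of_testBit (w - 1 - k) ?_ ?_ fun j hj => ?_
  · rwa [← getMsbD_sub_eq_testBit x (by omega), Nat.sub_sub_self (by omega)]
  · rwa [← getMsbD_sub_eq_testBit y (by omega), Nat.sub_sub_self (by omega)]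
  · rcases lt_or_ge j w with hjw | hjw
    · rw [← getMsbD_sub_eq_testBit x hjw, ← getMsbD_sub_eq_testBit y hjw]
      exact hprefix _ (by omega)
    · rw [Nat.testBit_lt_two_pow (x.isLt.trans_le (Nat.pow_le_pow_right two_pos hjw)),
        Nat.testBit_lt_two_pow (y.isLt.trans_le (Nat.pow_le_pow_right two_pos hjw))]

theorem exists_getMsbD_ne_of_ne {x y : BitVec w} (hne : x ≠ y) :
    ∃ k < w, (∀ j < k, x.getMsbD j = y.getMsbD j) ∧ x.getMsbD k ≠ y.getMsbD k := by
  classical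
  have hex : ∃ k, k < w ∧ x.getMsbD k ≠ y.getMsbD k := by
    by_contra! h
    exact hne (eq_of_getMsbD_eq h)
  obtain ⟨hk, hne⟩ := Nat.find_spec hex
  exact ⟨Nat.find hex, hk, fun j hj => by_contra fun h => Nat.find_min hex hj ⟨by omega, h⟩, hne⟩

def IsAttractorGreedy (S : Set (BitVec w)) (a x : BitVec w) : Prop :=
  ∀ k < w, (∃ y ∈ S, (∀ j < k, y.getMsbD j = x.getMsbD j) ∧ y.getMsbD k = a.getMsbD k) →
    x.getMsbD k = a.getMsbD k

theorem IsAttractorGreedy.toNat_xor_le {S : Set (BitVec w)} {a x : BitVec w}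
    (hgreedy : IsAttractorGreedy S a x) {y : BitVec w} (hy : y ∈ S) :
    (x ^^^ a).toNat ≤ (y ^^^ a).toNat := by
  rcases eq_or_ne x y with rfl | hne
  · rfl
  obtain ⟨k, hk, hprefix, hxy⟩ := exists_getMsbD_ne_of_ne hne
  have hya : y.getMsbD k ≠ a.getMsbD k := fun hya =>
    hxy ((hgreedy k hk ⟨y, hy, fun j hj => (hprefix j hj).symm, hya⟩).trans hya.symm)
  have hxa : x.getMsbD k = a.getMsbD k := by
    revert hxy hya; cases x.getMsbD k <;> cases y.getMsbD k <;> cases a.getMsbD k <;> simp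
  refine (toNat_lt_toNat_of_getMsbD_s3 hk (fun j hj => ?_) ?_ ?_).le
  · simp only [getMsbD_xor, hprefix j hj]
  · simp [hxa]
  · simpa using hya

theorem not_intMin_succ (w : ℕ) : ~~~intMin (w + 1) = cons false (allOnes w) := by
  ext i hi
  simp only [← getLsbD_eq_getElem, getLsbD_not, getLsbD_cons, getLsbD_intMin, getLsbD_allOnes]
  split_ifs with h <;> simp [hi, h]; omega

theorem toNat_xor_not_intMin (x : BitVec w) :
    ((x ^^^ ~~~intMin w).toNat : ℤ) = 2 ^ (w - 1) - 1 - x.toInt := by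
  cases w with
  | zero => simp [of_length_zero]
  | succ w =>
    rw [← cons_msb_setWidth x, not_intMin_succ, cons_xor_cons, xor_allOnes, toNat_cons',
      toInt_eq_msb_cond, msb_cons, toNat_cons']
    generalize x.setWidth w = y
    have hy : y.toNat < 2 ^ w := y.isLt
    obtain ⟨p, hp⟩ : ∃ p, 2 ^ w = p := ⟨_, rfl⟩
    have hpz : (2 : ℤ) ^ w = p := by rw [← hp]; push_cast; rfl
    cases x.msb <;> simp [Nat.shiftLeft_eq, hp, hpz] at hy ⊢ <;> omega

end BitVec

theorem signed_max_lex_greedy_general (n : ℕ) (S : Set (BitVec n))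
    (x : BitVec n)
    (a : BitVec n) (ha : a = ~~~(BitVec.intMin n))
    (hgreedy : ∀ k < n,
      (∃ y ∈ S, (∀ j < k, y.getMsbD j = x.getMsbD j) ∧
        y.getMsbD k = a.getMsbD k) →
      x.getMsbD k = a.getMsbD k) :
    ∀ y ∈ S, y.toInt ≤ x.toInt := by
  subst ha
  intro y hy
  have hle := BitVec.IsAttractorGreedy.toNat_xor_le hgreedy hy
  have hx := BitVec.toNat_xor_not_intMin x
  have hy := BitVec.toNat_xor_not_intMin y
  omega

theorem signed_max_lex_greedy (n : ℕ) (hn : 1 ≤ n) (S : Set (BitVec n))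
    (hS : S.Nonempty) (x : BitVec n) (hx : x ∈ S)
    (a : BitVec n) (ha : a = ~~~(BitVec.intMin n))
    (hgreedy : ∀ k < n,
      (∃ y ∈ S, (∀ j < k, y.getMsbD j = x.getMsbD j) ∧
        y.getMsbD k = a.getMsbD k) →
      x.getMsbD k = a.getMsbD k) :
    ∀ y ∈ S, y.toInt ≤ x.toInt :=
  signed_max_lex_greedy_general n S x a ha hgreedy
end

section
/- Fix E ≥ 2 and S ≥ 2 and consider FP patterns of sort (E,S). For all non-NaN patterns x, y with sgn x = false and sgn y = false: val x < val y if and only if x.toNat < y.toNat. That is, on non-NaN patterns with sign bit 0, the IEEE 754 value is a strictly increasing function of the pattern's unsigned integer encoding. -/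
/-- The sign bit of an FP pattern of sort (E,S): the most significant bit. -/
def FP.sgn (E S : ℕ) (x : BitVec (E + S)) : Bool := x.getMsbD 0

/-- The exponent field of an FP pattern of sort (E,S). -/
def FP.efield (E S : ℕ) (x : BitVec (E + S)) : ℕ := (x.toNat / 2 ^ (S - 1)) % 2 ^ E

/-- The significand field of an FP pattern of sort (E,S). -/
def FP.mfield (E S : ℕ) (x : BitVec (E + S)) : ℕ := x.toNat % 2 ^ (S - 1)

/-- The exponent bias of sort (E,S). -/
def FP.bias (E : ℕ) : ℤ := 2 ^ (E - 1) - 1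

/-- An FP pattern is NaN iff its exponent field is all-ones and its significand is nonzero. -/
def FP.isNaN (E S : ℕ) (x : BitVec (E + S)) : Prop :=
  FP.efield E S x = 2 ^ E - 1 ∧ FP.mfield E S x ≠ 0

/-- The IEEE 754 value of a (non-NaN) FP pattern of sort (E,S), as an extended real. -/
noncomputable def FP.val (E S : ℕ) (x : BitVec (E + S)) : EReal :=
  if FP.efield E S x = 2 ^ E - 1 then
    (if FP.sgn E S x then (⊥ : EReal) else (⊤ : EReal))
  else if FP.efield E S x = 0 then
    (((if FP.sgn E S x then (-1 : ℝ) else 1) * 2 ^ ((1 : ℤ) - FP.bias E) *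
        ((FP.mfield E S x : ℝ) / 2 ^ (S - 1)) : ℝ) : EReal)
  else
    (((if FP.sgn E S x then (-1 : ℝ) else 1) * 2 ^ ((FP.efield E S x : ℤ) - FP.bias E) *
        (1 + (FP.mfield E S x : ℝ) / 2 ^ (S - 1)) : ℝ) : EReal)

/-!
With sign bit 0, a pattern is its exponent field followed by its significand field, so
`x.toNat = e * 2 ^ (S - 1) + m` orders patterns lexicographically by `(e, m)`. A finite pattern
has value `unitVal (2 ^ (S - 1)) e m` times the least positive subnormal, and `unitVal` increases
in that lexicographic order because the largest value with exponent `e` stays below the smallest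
with exponent `e + 1`. The one infinite pattern, `+∞`, has the largest encoding among non-NaN
patterns with sign bit 0.
-/

namespace FP

section Fields

variable {E S : ℕ} {x y : BitVec (E + S)}

lemma mfield_lt : mfield E S x < 2 ^ (S - 1) :=
  Nat.mod_lt _ (by positivity)

lemma efield_lt : efield E S x < 2 ^ E :=
  Nat.mod_lt _ (by positivity)

lemma toNat_lt_of_sgn_eq_false (hsx : sgn E S x = false) : x.toNat < 2 ^ (S - 1) * 2 ^ E := by
  have hx : 2 * x.toNat < 2 ^ (E + S) := BitVec.msb_eq_false_iff_two_mul_lt.mp hsx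
  have hpow : 2 ^ (E + S) ≤ 2 * (2 ^ (S - 1) * 2 ^ E) := by
    rw [← pow_add, ← pow_succ']
    exact Nat.pow_le_pow_right two_pos (by omega)
  omega

lemma efield_eq_of_sgn_eq_false (hsx : sgn E S x = false) :
    efield E S x = x.toNat / 2 ^ (S - 1) :=
  Nat.mod_eq_of_lt (Nat.div_lt_of_lt_mul (toNat_lt_of_sgn_eq_false hsx))

lemma efield_mul_add_mfield (hsx : sgn E S x = false) :
    efield E S x * 2 ^ (S - 1) + mfield E S x = x.toNat := by
  rw [efield_eq_of_sgn_eq_false hsx, mfield]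
  exact Nat.div_add_mod' _ _

lemma efield_le_efield (hsx : sgn E S x = false) (hsy : sgn E S y = false)
    (h : x.toNat ≤ y.toNat) : efield E S x ≤ efield E S y := by
  rw [efield_eq_of_sgn_eq_false hsx, efield_eq_of_sgn_eq_false hsy]
  exact Nat.div_le_div_right h

end Fields

/-- The value of a finite pattern with exponent field `e` and significand field `m`, counted in
units of the least positive subnormal `2 ^ (1 - bias) / P`, where `P = 2 ^ (S - 1)`. -/
def unitVal (P e m : ℕ) : ℕ :=
  if e = 0 then m else 2 ^ (e - 1) * (P + m)

section UnitVal

variable {P e e' m m' : ℕ}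

lemma unitVal_lt_unitVal_right (h : m < m') : unitVal P e m < unitVal P e m' := by
  unfold unitVal
  split_ifs
  · exact h
  · gcongr

lemma unitVal_lt_two_pow_mul (hm : m < P) : unitVal P e m < 2 ^ e * P := by
  unfold unitVal
  split_ifs with he
  · simpa [he] using hm
  · calc 2 ^ (e - 1) * (P + m) < 2 ^ (e - 1) * (P + P) := by gcongr
      _ = 2 ^ (e - 1 + 1) * P := by ring
      _ = 2 ^ e * P := by rw [Nat.sub_add_cancel (Nat.pos_of_ne_zero he)]

lemma two_pow_mul_le_unitVal (he : e ≠ 0) : 2 ^ (e - 1) * P ≤ unitVal P e m := by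
  rw [unitVal, if_neg he]
  exact Nat.mul_le_mul_left _ (Nat.le_add_right P m)

lemma unitVal_lt_unitVal (hm : m < P) (hm' : m' < P) (h : e * P + m < e' * P + m') :
    unitVal P e m < unitVal P e' m' := by
  obtain hlt | rfl | hgt := lt_trichotomy e e'
  · calc unitVal P e m < 2 ^ e * P := unitVal_lt_two_pow_mul hm
      _ ≤ 2 ^ (e' - 1) * P := by gcongr <;> omega
      _ ≤ unitVal P e' m' := two_pow_mul_le_unitVal (by omega)
  · exact unitVal_lt_unitVal_right (by omega)
  · have : e' * P + P ≤ e * P := by nlinarith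
    omega

end UnitVal

section Val

variable {E S : ℕ} {x y : BitVec (E + S)}

lemma val_eq_top (hsx : sgn E S x = false) (he : efield E S x = 2 ^ E - 1) : val E S x = ⊤ := by
  simp [val, he, hsx]

lemma val_eq_coe_unitVal (hsx : sgn E S x = false) (he : efield E S x ≠ 2 ^ E - 1) :
    val E S x = ((unitVal (2 ^ (S - 1)) (efield E S x) (mfield E S x) *
      ((2 : ℝ) ^ (1 - bias E) / 2 ^ (S - 1)) : ℝ) : EReal) := by
  rw [val, if_neg he, hsx, unitVal]
  simp only [Bool.false_eq_true, if_false, one_mul]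
  split_ifs with h0
  · congr 1
    ring
  · have hsplit : (2 : ℝ) ^ ((efield E S x : ℤ) - bias E) =
        2 ^ (efield E S x - 1) * 2 ^ (1 - bias E) := by
      rw [← zpow_natCast, ← zpow_add₀ two_ne_zero]
      congr 1
      omega
    rw [hsplit]
    congr 1
    push_cast
    field_simp

lemma val_lt_val_of_toNat_lt (hx : ¬ isNaN E S x) (hy : ¬ isNaN E S y)
    (hsx : sgn E S x = false) (hsy : sgn E S y = false) (h : x.toNat < y.toNat) :
    val E S x < val E S y := by
  have hee := efield_le_efield hsx hsy h.le
  have hex : efield E S x ≠ 2 ^ E - 1 := by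
    intro hex
    have hy_lt : efield E S y < 2 ^ E := efield_lt
    have hey : efield E S y = 2 ^ E - 1 := by omega
    have hmx : mfield E S x = 0 := by_contra fun hm => hx ⟨hex, hm⟩
    have hmy : mfield E S y = 0 := by_contra fun hm => hy ⟨hey, hm⟩
    rw [← efield_mul_add_mfield hsx, ← efield_mul_add_mfield hsy, hex, hey, hmx, hmy] at h
    exact lt_irrefl _ h
  rw [val_eq_coe_unitVal hsx hex]
  by_cases hey : efield E S y = 2 ^ E - 1
  · rw [val_eq_top hsy hey]
    exact EReal.coe_lt_top _
  rw [val_eq_coe_unitVal hsy hey, EReal.coe_lt_coe_iff]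
  gcongr
  rw [← efield_mul_add_mfield hsx, ← efield_mul_add_mfield hsy] at h
  exact unitVal_lt_unitVal mfield_lt mfield_lt h

end Val

end FP

theorem fp_pos_val_lt_iff_toNat_lt_general (E S : ℕ)
    (x y : BitVec (E + S)) (hx : ¬ FP.isNaN E S x) (hy : ¬ FP.isNaN E S y)
    (hsx : FP.sgn E S x = false) (hsy : FP.sgn E S y = false) :
    FP.val E S x < FP.val E S y ↔ x.toNat < y.toNat := by
  refine ⟨fun hlt => ?_, FP.val_lt_val_of_toNat_lt hx hy hsx hsy⟩
  by_contra hge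
  obtain heq | hyx := (not_lt.mp hge).eq_or_lt
  · rw [BitVec.toNat_injective heq] at hlt
    exact lt_irrefl _ hlt
  · exact (FP.val_lt_val_of_toNat_lt hy hx hsy hsx hyx).not_gt hlt

theorem fp_pos_val_lt_iff_toNat_lt (E S : ℕ) (hE : 2 ≤ E) (hS : 2 ≤ S)
    (x y : BitVec (E + S)) (hx : ¬ FP.isNaN E S x) (hy : ¬ FP.isNaN E S y)
    (hsx : FP.sgn E S x = false) (hsy : FP.sgn E S y = false) :
    FP.val E S x < FP.val E S y ↔ x.toNat < y.toNat :=
  fp_pos_val_lt_iff_toNat_lt_general E S x y hx hy hsx hsy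
end

section
/- (Theorem 2 of the paper, minimization case.) Fix E ≥ 2 and S ≥ 2, let n := E + S, and let 𝒮 be a nonempty set of non-NaN FP patterns of sort (E,S). Suppose x ∈ 𝒮 satisfies the following greedy condition for every k < n: for every non-NaN pattern z with z.getMsbD j = x.getMsbD j for all j < k and with val z ≤ val w for every non-NaN pattern w satisfying w.getMsbD j = x.getMsbD j for all j < k (i.e., z is a dynamic attractor for the k-bit prefix of x), if there exists y ∈ 𝒮 with y.getMsbD j = x.getMsbD j for all j < k and y.getMsbD k = z.getMsbD k, then x.getMsbD k = z.getMsbD k. Then val x ≤ val y for every y ∈ 𝒮; i.e., any pattern lexicographically maximizing the attractor trajectory attains the minimum IEEE 754 value over 𝒮. -/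
/-!
On non-NaN patterns the value is monotone in the sign-magnitude key: the sign bit, then the
remaining bits read as a binary magnitude, ordered as a signed integer. Take `y ∈ 𝒮` and the
first bit `k` at which `x` and `y` differ. If `x` carries the "low" bit there (a set sign bit, or
below the sign bit a copy of the sign), then `key x ≤ key y`. Otherwise `y` carries it, and a
minimizer of the value over the non-NaN patterns sharing `y`'s first `k + 1` bits is a dynamic
attractor for the `k`-bit prefix of `x` whose bit `k` is realized in `𝒮` by `y`; the greedy
condition then forces `x`'s bit `k` to be `y`'s, a contradiction.
-/

namespace BitVec

variable {n : ℕ}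

theorem exists_getMsbD_ne_of_ne_s19 {u v : BitVec n} (h : u ≠ v) :
    ∃ k < n, (∀ j < k, u.getMsbD j = v.getMsbD j) ∧ u.getMsbD k ≠ v.getMsbD k := by
  have hex : ∃ k, k < n ∧ u.getMsbD k ≠ v.getMsbD k := by
    by_contra! hall
    exact h (eq_of_getMsbD_eq hall)
  refine ⟨Nat.find hex, (Nat.find_spec hex).1, fun j hj => ?_, (Nat.find_spec hex).2⟩
  by_contra hne
  exact Nat.find_min hex hj ⟨hj.trans (Nat.find_spec hex).1, hne⟩

theorem toNat_lt_toNat_of_getMsbD_s19 {u v : BitVec n} {k : ℕ}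
    (hpre : ∀ j < k, u.getMsbD j = v.getMsbD j) (hu : u.getMsbD k = false)
    (hv : v.getMsbD k = true) : u.toNat < v.toNat := by
  have hk : k < n := by
    by_contra hk
    simp [getMsbD_eq_getLsbD, hk] at hv
  have hbit : ∀ x : BitVec n, x.toNat.testBit (n - 1 - k) = x.getMsbD k := fun x => by
    rw [testBit_toNat, getLsbD_eq_getMsbD, decide_eq_true (by omega),
      Bool.true_and, show n - 1 - (n - 1 - k) = k by omega]
  refine Nat.lt_of_testBit (n - 1 - k) (by rw [hbit, hu]) (by rw [hbit, hv]) fun i hi => ?_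
  simp only [testBit_toNat, getLsbD_eq_getMsbD]
  by_cases hin : i < n
  · rw [hpre (n - 1 - i) (by omega)]
  · simp [hin]

end BitVec

namespace FP

section Bits

variable {n : ℕ}

def mag (x : BitVec n) : ℕ := x.toNat % 2 ^ (n - 1)

theorem mag_lt_mag_of_getMsbD {u v : BitVec n} {k : ℕ} (hk : 0 < k)
    (hpre : ∀ j < k, u.getMsbD j = v.getMsbD j) (hu : u.getMsbD k = false)
    (hv : v.getMsbD k = true) : mag u < mag v := by
  have hn : k < n := by
    by_contra hkn
    simp [BitVec.getMsbD_eq_getLsbD, hkn] at hv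
  have hshift : ∀ (x : BitVec n) (j : ℕ), (x.setWidth (n - 1)).getMsbD j = x.getMsbD (j + 1) :=
    fun x j => by rw [BitVec.getMsbD_setWidth, show n - 1 - n = 0 by omega,
      show j + n - (n - 1) = j + 1 by omega]; simp
  have := BitVec.toNat_lt_toNat_of_getMsbD_s19 (u := u.setWidth (n - 1)) (v := v.setWidth (n - 1))
    (k := k - 1) (fun j hj => by rw [hshift, hshift, hpre _ (by omega)])
    (by rw [hshift, Nat.sub_add_cancel hk, hu]) (by rw [hshift, Nat.sub_add_cancel hk, hv])
  simpa only [mag, BitVec.toNat_setWidth] using this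

def key (x : BitVec n) : ℤ := if x.getMsbD 0 then -(mag x : ℤ) else mag x

/-- The value of bit `k` that makes a pattern with the higher bits of `x` smaller:
a set sign bit, and below the sign bit a copy of it. -/
def lowBit (x : BitVec n) (k : ℕ) : Bool := decide (k = 0) || x.getMsbD 0

theorem lowBit_eq_of_getMsbD {u v : BitVec n} {k : ℕ}
    (hpre : ∀ j < k, u.getMsbD j = v.getMsbD j) : lowBit u k = lowBit v k := by
  rcases Nat.eq_zero_or_pos k with rfl | hk
  · rfl
  · simp only [lowBit, hpre 0 hk]

theorem key_le_key_of_lowBit {u v : BitVec n} {k : ℕ}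
    (hpre : ∀ j < k, u.getMsbD j = v.getMsbD j) (hlow : u.getMsbD k = lowBit u k)
    (hne : v.getMsbD k ≠ u.getMsbD k) : key u ≤ key v := by
  rcases Nat.eq_zero_or_pos k with rfl | hk
  · simp only [lowBit, decide_true, Bool.true_or] at hlow
    have hv : v.getMsbD 0 = false := by simpa [hlow] using hne
    simp only [key, hlow, hv, if_true, Bool.false_eq_true, if_false]
    omega
  · simp only [lowBit, show decide (k = 0) = false by simpa using hk.ne', Bool.false_or]
      at hlow
    simp only [key, ← hpre 0 hk]
    cases hs : u.getMsbD 0 <;> rw [hs] at hlow <;>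
      simp only [hlow, Bool.not_eq_true, Bool.not_eq_false, ne_eq] at hne <;>
      simp only [Bool.false_eq_true, if_true, if_false, neg_le_neg_iff, Nat.cast_le]
    · exact (mag_lt_mag_of_getMsbD hk hpre hlow hne).le
    · exact (mag_lt_mag_of_getMsbD hk (fun j hj => (hpre j hj).symm) hne hlow).le

end Bits

section Value

variable {E S : ℕ}

theorem efield_eq_mag_div (hS : 0 < S) (x : BitVec (E + S)) :
    efield E S x = mag x / 2 ^ (S - 1) := by
  rw [efield, mag, show E + S - 1 = (S - 1) + E by omega, pow_add,
    Nat.mod_mul_right_div_self]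

theorem mfield_eq_mag_mod (hS : 0 < S) (x : BitVec (E + S)) :
    mfield E S x = mag x % 2 ^ (S - 1) :=
  (Nat.mod_mod_of_dvd _ (pow_dvd_pow 2 (by omega))).symm

theorem mag_le_of_not_isNaN (hS : 0 < S) {x : BitVec (E + S)} (hx : ¬ isNaN E S x) :
    mag x ≤ (2 ^ E - 1) * 2 ^ (S - 1) := by
  have he : mag x / 2 ^ (S - 1) < 2 ^ E := efield_eq_mag_div hS x ▸ Nat.mod_lt _ (by positivity)
  rw [isNaN, efield_eq_mag_div hS, mfield_eq_mag_mod hS, not_and_not_right] at hx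
  by_cases hmax : mag x / 2 ^ (S - 1) = 2 ^ E - 1
  · have := Nat.div_add_mod (mag x) (2 ^ (S - 1))
    rw [hmax, hx hmax, add_zero] at this
    rw [← this, mul_comm]
  · calc mag x ≤ 2 ^ (S - 1) * (mag x / 2 ^ (S - 1) + 1) :=
          (Nat.lt_mul_div_succ _ (by positivity)).le
      _ ≤ 2 ^ (S - 1) * (2 ^ E - 1) := Nat.mul_le_mul_left _ (by omega)
      _ = (2 ^ E - 1) * 2 ^ (S - 1) := mul_comm _ _

/-- The value of a positive finite pattern with exponent field `e` and significand field `m`. -/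
noncomputable def finVal (E S e m : ℕ) : ℝ :=
  if e = 0 then 2 ^ ((1 : ℤ) - bias E) * ((m : ℝ) / 2 ^ (S - 1))
  else 2 ^ ((e : ℤ) - bias E) * (1 + (m : ℝ) / 2 ^ (S - 1))

theorem finVal_le_finVal_of_le {e m₁ m₂ : ℕ} (h : m₁ ≤ m₂) :
    finVal E S e m₁ ≤ finVal E S e m₂ := by
  unfold finVal
  split_ifs <;> gcongr

theorem finVal_le_zpow (e : ℕ) {m : ℕ} (hm : m < 2 ^ (S - 1)) :
    finVal E S e m ≤ 2 ^ ((e : ℤ) + 1 - bias E) := by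
  have hm' : (m : ℝ) / 2 ^ (S - 1) ≤ 1 :=
    (div_le_one (by positivity)).2 (by exact_mod_cast hm.le)
  unfold finVal
  split_ifs with he
  · calc (2 : ℝ) ^ ((1 : ℤ) - bias E) * ((m : ℝ) / 2 ^ (S - 1))
          ≤ 2 ^ ((1 : ℤ) - bias E) * 1 := by gcongr
      _ = 2 ^ ((e : ℤ) + 1 - bias E) := by simp [he]
  · calc (2 : ℝ) ^ ((e : ℤ) - bias E) * (1 + (m : ℝ) / 2 ^ (S - 1))
          ≤ 2 ^ ((e : ℤ) - bias E) * 2 := by gcongr; linarith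
      _ = 2 ^ ((e : ℤ) + 1 - bias E) := by
          rw [← zpow_add_one₀ two_ne_zero]; ring_nf

theorem zpow_le_finVal {e : ℕ} (he : e ≠ 0) (m : ℕ) :
    (2 : ℝ) ^ ((e : ℤ) - bias E) ≤ finVal E S e m := by
  rw [finVal, if_neg he]
  exact le_mul_of_one_le_right (by positivity) (le_add_of_nonneg_right (by positivity))

theorem finVal_le_finVal_of_lt {e₁ e₂ m₁ : ℕ} (he : e₁ < e₂) (hm : m₁ < 2 ^ (S - 1))
    (m₂ : ℕ) :
    finVal E S e₁ m₁ ≤ finVal E S e₂ m₂ :=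
  calc finVal E S e₁ m₁ ≤ 2 ^ ((e₁ : ℤ) + 1 - bias E) := finVal_le_zpow e₁ hm
    _ ≤ 2 ^ ((e₂ : ℤ) - bias E) := zpow_le_zpow_right₀ one_le_two (by omega)
    _ ≤ finVal E S e₂ m₂ := zpow_le_finVal (by omega) m₂

theorem monotone_finVal_div_mod :
    Monotone fun n => finVal E S (n / 2 ^ (S - 1)) (n % 2 ^ (S - 1)) := by
  intro n₁ n₂ h
  rcases (Nat.div_le_div_right (c := 2 ^ (S - 1)) h).lt_or_eq with hlt | heq
  · exact finVal_le_finVal_of_lt hlt (Nat.mod_lt _ (by positivity)) _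
  · have h₁ := Nat.div_add_mod n₁ (2 ^ (S - 1))
    have h₂ := Nat.div_add_mod n₂ (2 ^ (S - 1))
    simp only [heq]
    exact finVal_le_finVal_of_le (by rw [heq] at h₁; omega)

/-- The value of the positive non-NaN pattern with magnitude `n`. -/
noncomputable def absVal (E S n : ℕ) : EReal :=
  if n / 2 ^ (S - 1) = 2 ^ E - 1 then ⊤ else finVal E S (n / 2 ^ (S - 1)) (n % 2 ^ (S - 1))

theorem val_eq_absVal (hS : 0 < S) (x : BitVec (E + S)) :
    val E S x = if x.getMsbD 0 then -absVal E S (mag x) else absVal E S (mag x) := by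
  rw [val, sgn, efield_eq_mag_div hS, mfield_eq_mag_mod hS, absVal, finVal]
  split_ifs <;> simp only [EReal.neg_top, neg_mul, one_mul, EReal.coe_neg]

theorem absVal_zero (hE : 0 < E) : absVal E S 0 = 0 := by
  have : (0 : ℕ) ≠ 2 ^ E - 1 := by
    have := Nat.one_lt_two_pow hE.ne'
    omega
  simp [absVal, finVal, this]

theorem absVal_monotoneOn :
    MonotoneOn (absVal E S) (Set.Iic ((2 ^ E - 1) * 2 ^ (S - 1))) := by
  intro n₁ _ n₂ hn₂ h
  have he₂ : n₂ / 2 ^ (S - 1) ≤ 2 ^ E - 1 :=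
    Nat.div_le_of_le_mul (by rw [mul_comm]; exact hn₂)
  have he₁ : n₁ / 2 ^ (S - 1) ≤ n₂ / 2 ^ (S - 1) := Nat.div_le_div_right h
  unfold absVal
  by_cases hmax : n₂ / 2 ^ (S - 1) = 2 ^ E - 1
  · rw [if_pos hmax]
    exact le_top
  · rw [if_neg hmax, if_neg (by omega), EReal.coe_le_coe_iff]
    exact monotone_finVal_div_mod h

theorem val_le_val_of_key_le (hE : 0 < E) (hS : 0 < S) {u v : BitVec (E + S)}
    (hu : ¬ isNaN E S u) (hv : ¬ isNaN E S v) (h : key u ≤ key v) :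
    val E S u ≤ val E S v := by
  have hu' := mag_le_of_not_isNaN hS hu
  have hv' := mag_le_of_not_isNaN hS hv
  have hnonneg : ∀ {x : BitVec (E + S)}, ¬ isNaN E S x → 0 ≤ absVal E S (mag x) := fun hx =>
    absVal_zero (S := S) hE ▸
      absVal_monotoneOn (by simp) (mag_le_of_not_isNaN hS hx) (Nat.zero_le _)
  rw [val_eq_absVal hS u, val_eq_absVal hS v]
  unfold key at h
  cases hsu : u.getMsbD 0 <;> cases hsv : v.getMsbD 0 <;> simp only [hsu, hsv] at h ⊢ <;>
    simp only [Bool.false_eq_true, if_true, if_false] at h ⊢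
  · exact absVal_monotoneOn hu' hv' (by exact_mod_cast h)
  · -- `+0` against `-0`
    have hmu : mag u = 0 := by omega
    have hmv : mag v = 0 := by omega
    rw [hmu, hmv, absVal_zero hE, neg_zero]
  · exact (EReal.neg_le_neg_iff.2 (hnonneg hu)).trans (by simpa using hnonneg hv)
  · exact EReal.neg_le_neg_iff.2 (absVal_monotoneOn hv' hu' (by omega))

end Value

/-- `z` is a dynamic attractor for the `k`-bit prefix of `x`. -/
def IsAttractor (E S : ℕ) (x : BitVec (E + S)) (k : ℕ) (z : BitVec (E + S)) : Prop :=
  ¬ isNaN E S z ∧ (∀ j < k, z.getMsbD j = x.getMsbD j) ∧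
    ∀ w : BitVec (E + S), ¬ isNaN E S w → (∀ j < k, w.getMsbD j = x.getMsbD j) →
      val E S z ≤ val E S w

/-- Minimizing over the patterns that share `y`'s bit `k` minimizes over the whole prefix class,
since every pattern of the other half has the larger key. -/
theorem exists_isAttractor_getMsbD_eq {E S : ℕ} (hE : 0 < E) (hS : 0 < S)
    {x y : BitVec (E + S)} {k : ℕ} (hy : ¬ isNaN E S y)
    (hyx : ∀ j < k, y.getMsbD j = x.getMsbD j) (hlow : y.getMsbD k = lowBit y k) :
    ∃ z, IsAttractor E S x k z ∧ z.getMsbD k = y.getMsbD k := by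
  let T := {w : BitVec (E + S) | ¬ isNaN E S w ∧ (∀ j < k, w.getMsbD j = x.getMsbD j) ∧
    w.getMsbD k = y.getMsbD k}
  obtain ⟨z, ⟨hz, hzx, hzk⟩, hzmin⟩ :=
    Set.exists_min_image T (val E S) (Set.toFinite T) ⟨y, hy, hyx, rfl⟩
  refine ⟨z, ⟨hz, hzx, fun w hw hwx => ?_⟩, hzk⟩
  by_cases hwk : w.getMsbD k = y.getMsbD k
  · exact hzmin w ⟨hw, hwx, hwk⟩
  · have hzw : ∀ j < k, z.getMsbD j = w.getMsbD j := fun j hj => (hzx j hj).trans (hwx j hj).symm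
    have hzy : ∀ j < k, z.getMsbD j = y.getMsbD j := fun j hj => (hzx j hj).trans (hyx j hj).symm
    refine val_le_val_of_key_le hE hS hz hw (key_le_key_of_lowBit hzw ?_ (hzk ▸ hwk))
    rw [hzk, hlow, lowBit_eq_of_getMsbD hzy]

end FP

theorem fp_lex_greedy_attains_min_general (E S : ℕ) (hE : 2 ≤ E) (hS : 2 ≤ S)
    (𝒮 : Set (BitVec (E + S)))
    (hnonan : ∀ y ∈ 𝒮, ¬ FP.isNaN E S y)
    (x : BitVec (E + S)) (hx : x ∈ 𝒮)
    (hgreedy : ∀ k < E + S, ∀ z : BitVec (E + S), ¬ FP.isNaN E S z →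
        (∀ j < k, z.getMsbD j = x.getMsbD j) →
        (∀ w : BitVec (E + S), ¬ FP.isNaN E S w →
          (∀ j < k, w.getMsbD j = x.getMsbD j) → FP.val E S z ≤ FP.val E S w) →
        (∃ y ∈ 𝒮, (∀ j < k, y.getMsbD j = x.getMsbD j) ∧
          y.getMsbD k = z.getMsbD k) →
        x.getMsbD k = z.getMsbD k) :
    ∀ y ∈ 𝒮, FP.val E S x ≤ FP.val E S y := by
  intro y hy
  obtain rfl | hxy := eq_or_ne x y
  · exact le_rfl
  obtain ⟨k, hkn, hxy, hk⟩ := BitVec.exists_getMsbD_ne_of_ne_s19 hxy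
  by_cases hxlow : x.getMsbD k = FP.lowBit x k
  · exact FP.val_le_val_of_key_le (by omega) (by omega) (hnonan x hx) (hnonan y hy)
      (FP.key_le_key_of_lowBit hxy hxlow (Ne.symm hk))
  · have hylow : y.getMsbD k = FP.lowBit y k := by
      rw [← FP.lowBit_eq_of_getMsbD hxy, Bool.eq_not_of_ne (Ne.symm hk),
        Bool.eq_not_of_ne (Ne.symm hxlow)]
    have hyx : ∀ j < k, y.getMsbD j = x.getMsbD j := fun j hj => (hxy j hj).symm
    obtain ⟨z, ⟨hz, hzx, hzmin⟩, hzk⟩ :=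
      FP.exists_isAttractor_getMsbD_eq (by omega) (by omega) (hnonan y hy) hyx hylow
    exact absurd (hzk ▸ hgreedy k hkn z hz hzx hzmin ⟨y, hy, hyx, hzk.symm⟩) hk

theorem fp_lex_greedy_attains_min (E S : ℕ) (hE : 2 ≤ E) (hS : 2 ≤ S)
    (𝒮 : Set (BitVec (E + S))) (hne : 𝒮.Nonempty)
    (hnonan : ∀ y ∈ 𝒮, ¬ FP.isNaN E S y)
    (x : BitVec (E + S)) (hx : x ∈ 𝒮)
    (hgreedy : ∀ k < E + S, ∀ z : BitVec (E + S), ¬ FP.isNaN E S z →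
        (∀ j < k, z.getMsbD j = x.getMsbD j) →
        (∀ w : BitVec (E + S), ¬ FP.isNaN E S w →
          (∀ j < k, w.getMsbD j = x.getMsbD j) → FP.val E S z ≤ FP.val E S w) →
        (∃ y ∈ 𝒮, (∀ j < k, y.getMsbD j = x.getMsbD j) ∧
          y.getMsbD k = z.getMsbD k) →
        x.getMsbD k = z.getMsbD k) :
    ∀ y ∈ 𝒮, FP.val E S x ≤ FP.val E S y :=
  fp_lex_greedy_attains_min_general E S hE hS 𝒮 hnonan x hx hgreedy
end
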